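/- arXiv:math/9507211 — 5 statements merged into one kernel-verified Lean document; each statement's English description precedes it below -/
import Mathlib

section
/- Let θ < λ be infinite cardinals. Suppose there exists a family F of at most 2^θ graphs, each of cardinality λ, such that for every set A of subsets of θ with |A| = λ, the incidence graph Γ_A embeds as an induced subgraph into some member of F. Then there exists a family D of at most 2^θ subsets of 𝒫(θ), each of cardinality λ, such that every X ⊆ 𝒫(θ) with |X| = λ is contained in some member of D (equivalently, cf⟨[2^θ]^λ, ⊆⟩ ≤ 2^θ). -/
universe u

open Cardinal

/-- The incidence graph `Γ_A` of a family `A` of subsets of `Θ`: the bipartite graph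
with left side `Θ`, right side `A`, and an edge between `z : Θ` and `x ∈ A` iff `z ∈ x`. -/
def incidenceGraph (Θ : Type u) (A : Set (Set Θ)) : SimpleGraph (Θ ⊕ ↥A) :=
  SimpleGraph.fromRel fun v w =>
    match v, w with
    | Sum.inl z, Sum.inr x => z ∈ (x : Set Θ)
    | _, _ => False

lemma adj_incidence {Θ : Type u} {A : Set (Set Θ)} (z : Θ) (x : A) :
    (incidenceGraph Θ A).Adj (Sum.inl z) (Sum.inr x) ↔ z ∈ (x : Set Θ) := by
  simp [incidenceGraph, SimpleGraph.fromRel_adj]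

/-- If `θ < λ` are infinite cardinals and there is a family of at most `2^θ` graphs,
each of cardinality `λ`, such that every incidence graph `Γ_A` with `|A| = λ` embeds
as an induced subgraph into one of them, then `cf⟨[2^θ]^λ, ⊆⟩ ≤ 2^θ`
(stated over the ground set `𝒫(θ)`, which has cardinality `2^θ`). -/
theorem stmt0 (θ lam : Cardinal.{u}) (hθ : ℵ₀ ≤ θ) (hθlam : θ < lam) (hlam : ℵ₀ ≤ lam)
    (ι : Type u) (V : ι → Type u) (G : ∀ i, SimpleGraph (V i))
    (hι : #ι ≤ 2 ^ θ) (hV : ∀ i, #(V i) = lam)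
    (hemb : ∀ A : Set (Set θ.out), #A = lam →
      ∃ i, Nonempty (incidenceGraph θ.out A ↪g G i)) :
    ∃ D : Set (Set (Set θ.out)), #D ≤ 2 ^ θ ∧ (∀ Y ∈ D, #Y = lam) ∧
      ∀ X : Set (Set θ.out), #X = lam → ∃ Y ∈ D, X ⊆ Y := by
  have hcard : #(Set θ.out) = 2 ^ θ := by
    rw [Cardinal.mk_set, Cardinal.mk_out]
  have h2θ : ℵ₀ ≤ 2 ^ θ := hθ.trans (Cardinal.cantor θ).le
  by_cases hle : lam ≤ 2 ^ θ
  · -- main case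
    obtain ⟨P, hP⟩ : ∃ P : Set (Set θ.out), #P = lam :=
      Cardinal.le_mk_iff_exists_set.mp (hcard ▸ hle)
    set Φ : (Σ i, (θ.out → V i)) → Set (Set θ.out) :=
      fun p => Set.range (fun v : V p.1 => {z | (G p.1).Adj (p.2 z) v}) ∪ P with hΦ
    refine ⟨Set.range Φ, ?_, ?_, ?_⟩
    · calc #(Set.range Φ) ≤ #(Σ i, (θ.out → V i)) := Cardinal.mk_range_le
        _ = Cardinal.sum (fun i => #(θ.out → V i)) := Cardinal.mk_sigma _
        _ ≤ Cardinal.sum (fun _ : ι => 2 ^ θ) := by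
            refine Cardinal.sum_le_sum _ _ (fun i => ?_)
            have : #(θ.out → V i) = lam ^ θ := by
              rw [← Cardinal.power_def, hV, Cardinal.mk_out]
            rw [this]
            calc lam ^ θ ≤ (2 ^ θ) ^ θ := Cardinal.power_le_power_right hle
              _ = 2 ^ (θ * θ) := (Cardinal.power_mul).symm
              _ = 2 ^ θ := by rw [Cardinal.mul_eq_self hθ]
        _ = #ι * 2 ^ θ := Cardinal.sum_const' _ _
        _ ≤ 2 ^ θ * 2 ^ θ := mul_le_mul_left hι _
        _ = 2 ^ θ := Cardinal.mul_eq_self h2θ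
    · rintro Y ⟨p, rfl⟩
      refine le_antisymm ?_ ?_
      · calc #(Φ p) ≤ #(Set.range (fun v : V p.1 => {z | (G p.1).Adj (p.2 z) v})) + #P :=
              Cardinal.mk_union_le _ _
          _ ≤ lam + lam := by
              refine add_le_add ?_ (le_of_eq hP)
              exact (Cardinal.mk_range_le).trans (le_of_eq (hV p.1))
          _ = lam := Cardinal.add_eq_self hlam
      · rw [← hP]
        exact Cardinal.mk_le_mk_of_subset (Set.subset_union_right)
    · intro X hX
      obtain ⟨i, ⟨f⟩⟩ := hemb X hX
      refine ⟨Φ ⟨i, fun z => f (Sum.inl z)⟩, Set.mem_range_self _, ?_⟩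
      intro x hx
      left
      refine ⟨f (Sum.inr ⟨x, hx⟩), ?_⟩
      ext z
      simp only [Set.mem_setOf_eq]
      rw [f.map_rel_iff]
      exact (adj_incidence z ⟨x, hx⟩)
  · -- vacuous case
    refine ⟨∅, by simp, by simp, ?_⟩
    intro X hX
    exfalso
    exact hle (hX ▸ (Cardinal.mk_set_le X).trans_eq hcard)
end

section
/- Let κ be an infinite cardinal and let λ be an infinite cardinal with cf(κ) ≤ λ < κ. Then for every family D of at most κ many subsets of κ, each of cardinality λ, there exists a subset X of κ of cardinality λ that is not contained in any member of D; that is, cf⟨[κ]^λ, ⊆⟩ > κ. -/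
/-!
Enumerate `D` as `⟨Y_i : i < κ⟩` and let `S ⊆ κ` be cofinal of size `cf κ ≤ λ`.
For `s ∈ S` the union `⋃_{i ≤ s} Y_i` has size at most `|s| · λ < κ`, so some point `x_s`
lies outside it. No `Y_i` contains `{x_s : s ∈ S}`: pick `s ∈ S` above `i`. Padding this
set to size `λ` gives `X`.
-/

universe u

open Cardinal Set Order
open scoped Ordinal

theorem exists_mk_le_cof_forall_not_subset {α β : Type u} [Preorder α] {D : Set (Set β)}
    (rank : D → α) (hD : ∀ i, (⋃ Y ∈ rank ⁻¹' Iic i, (Y : Set β)) ≠ Set.univ) :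
    ∃ X : Set β, #X ≤ cof α ∧ ∀ Y ∈ D, ¬ X ⊆ Y := by
  obtain ⟨s, hs, hs_card⟩ := exists_cof_eq α
  choose x hx using fun i ↦ (ne_univ_iff_exists_notMem _).mp (hD i)
  refine ⟨x '' s, mk_image_le.trans hs_card.le, fun Y hY hsub ↦ ?_⟩
  obtain ⟨i, hi, hYi⟩ := hs (rank ⟨Y, hY⟩)
  exact hx i (mem_biUnion (show rank ⟨Y, hY⟩ ∈ Iic i from hYi) (hsub ⟨i, hi, rfl⟩))

theorem mk_Iic_lt {α : Type u} [LinearOrder α] [WellFoundedLT α] (hα : ℵ₀ ≤ #α)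
    (h : ord #α = typeLT α) (i : α) : #(Iic i) < #α := by
  rw [← Iio_insert]
  exact mk_insert_le.trans_lt
    (add_lt_of_lt hα (mk_Iio_lt i h) (one_lt_aleph0.trans_le hα))

theorem mk_biUnion_preimage_Iic_lt {α β : Type u} [LinearOrder α] [WellFoundedLT α]
    (hα : ℵ₀ ≤ #α) (h : ord #α = typeLT α) {D : Set (Set β)} {rank : D → α}
    (hrank : Function.Injective rank) {lam : Cardinal.{u}} (hlam : lam < #α)
    (hD : ∀ Y ∈ D, #Y ≤ lam) (i : α) :
    #(⋃ Y ∈ rank ⁻¹' Iic i, (Y : Set β)) < #α :=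
  calc #(⋃ Y ∈ rank ⁻¹' Iic i, (Y : Set β))
      ≤ #(rank ⁻¹' Iic i) * ⨆ Y : rank ⁻¹' Iic i, #(Y : Set β) := mk_biUnion_le _ _
    _ ≤ #(Iic i) * lam := by
      gcongr
      · exact mk_preimage_of_injective _ _ hrank
      · exact ciSup_le' fun Y ↦ hD _ Y.1.2
    _ < #α := mul_lt_of_lt hα (mk_Iic_lt hα h i) hlam

theorem exists_superset_mk_eq {β : Type u} {X₀ : Set β} {lam : Cardinal.{u}}
    (hlam : ℵ₀ ≤ lam) (hX₀ : #X₀ ≤ lam) (hβ : lam ≤ #β) :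
    ∃ X : Set β, X₀ ⊆ X ∧ #X = lam := by
  obtain ⟨S, hS⟩ := le_mk_iff_exists_set.mp hβ
  refine ⟨X₀ ∪ S, subset_union_left,
    le_antisymm ?_ (hS ▸ mk_le_mk_of_subset subset_union_right)⟩
  calc #(X₀ ∪ S : Set β) ≤ #X₀ + #S := mk_union_le _ _
    _ ≤ lam + lam := add_le_add hX₀ hS.le
    _ = lam := add_eq_self hlam

/-- If `κ` is infinite, `λ` is infinite and `cf(κ) ≤ λ < κ`, then any family of at most
`κ` many subsets of `κ`, each of cardinality `λ`, fails to be cofinal in `[κ]^λ`: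
some `X ∈ [κ]^λ` is contained in no member of the family.  Hence `cf⟨[κ]^λ, ⊆⟩ > κ`. -/
theorem stmt3 (κ lam : Cardinal.{u}) (hκ : ℵ₀ ≤ κ) (hlam : ℵ₀ ≤ lam)
    (hcf : κ.ord.cof ≤ lam) (hlt : lam < κ)
    (D : Set (Set κ.out)) (hD : #D ≤ κ) (hDcard : ∀ Y ∈ D, #Y = lam) :
    ∃ X : Set κ.out, #X = lam ∧ ∀ Y ∈ D, ¬ X ⊆ Y := by
  have hα : #κ.ord.ToType = κ := mk_ord_toType κ
  obtain ⟨rank⟩ : Nonempty (D ↪ κ.ord.ToType) := le_def _ _ |>.mp (hD.trans_eq hα.symm)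
  have hsmall (i : κ.ord.ToType) : #(⋃ Y ∈ rank ⁻¹' Iic i, (Y : Set κ.out)) < #κ.out :=
    (mk_biUnion_preimage_Iic_lt (by rwa [hα]) (by rw [hα, Ordinal.type_toType]) rank.injective
      (by rwa [hα]) (fun Y hY ↦ (hDcard Y hY).le) i).trans_eq (hα.trans (mk_out κ).symm)
  obtain ⟨X₀, hX₀_card, hX₀⟩ :=
    exists_mk_le_cof_forall_not_subset rank fun i hi ↦ (hsmall i).ne (by rw [hi, mk_univ])
  rw [Ordinal.cof_toType] at hX₀_card
  obtain ⟨X, hX₀X, hX⟩ :=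
    exists_superset_mk_eq hlam (hX₀_card.trans hcf) (hlt.le.trans (mk_out κ).ge)
  exact ⟨X, hX, fun Y hY hXY ↦ hX₀ Y hY (hX₀X.trans hXY)⟩
end

section
/- Let θ be an infinite cardinal and let λ be a cardinal with cf(2^θ) ≤ λ < 2^θ. Then there is no family F of at most 2^θ graphs, each of cardinality λ, such that for every set A of subsets of θ with |A| = λ, the incidence graph Γ_A embeds as an induced subgraph into some member of F. -/
/-!
A graph `G` on `V` together with a map `g : Θ → V` determines the family of traces
`{z | G.Adj (g z) v}`, `v ∈ V`, which has at most `|V| = λ` members; if `Γ_A` embeds into `G`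
via `f`, then `A` is contained in the trace family of `f` restricted to `Θ`. A family of
`2^θ` graphs yields only `2^θ · λ^θ = 2^θ` trace families, so it suffices to find a set
`A ⊆ 𝒫(θ)` with `|A| = λ` that lies in none of them. Enumerate the trace families along the
initial ordinal of `2^θ`; below each stage `t` fewer than `2^θ` families of size `λ < 2^θ` have
appeared, so some `x_t ⊆ θ` avoids all of them. Collecting the `x_t` along a cofinal set of
stages, of size `cf(2^θ) ≤ λ`, gives a set escaping every trace family.
-/

universe u

open Cardinal

namespace Cardinal

variable {X : Type u} {μ : Cardinal.{u}}

theorem exists_notMem_iUnion_of_mk_lt {ι : Type u} (S : ι → Set X) (hX : ℵ₀ ≤ #X)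
    (hι : #ι < #X) (hS : ∀ i, #(S i) ≤ μ) (hμ : μ < #X) : ∃ x, x ∉ ⋃ i, S i := by
  have hlt : #(⋃ i, S i) < #X :=
    calc #(⋃ i, S i) ≤ sum fun i => #(S i) := mk_iUnion_le_sum_mk
      _ ≤ sum fun _ : ι => μ := sum_le_sum _ _ hS
      _ = #ι * μ := sum_const' ι μ
      _ < #X := mul_lt_of_lt hX hι hμ
  by_contra! h
  rw [Set.eq_univ_of_forall h, mk_univ] at hlt
  exact hlt.false

theorem exists_mk_eq_forall_not_subset_of_cof_le {J : Type u} (S : J → Set X)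
    (hX : ℵ₀ ≤ #X) (hJ : #J ≤ #X) (hS : ∀ j, #(S j) ≤ μ) (hμ : μ < #X)
    (hcf : (#X).ord.cof ≤ μ) : ∃ A : Set X, #A = μ ∧ ∀ j, ¬ A ⊆ S j := by
  obtain ⟨e⟩ : #J ≤ #(#X).ord.ToType := by rwa [mk_toType, card_ord]
  have hescape (t : (#X).ord.ToType) : ∃ x, x ∉ ⋃ j : {j // e j < t}, S j := by
    refine exists_notMem_iUnion_of_mk_lt _ hX ?_ (fun j => hS j) hμ
    have hinj : #{j // e j < t} ≤ #(Set.Iio t) :=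
      mk_le_of_injective (f := fun j => ⟨e j, j.2⟩) fun a b hab =>
        Subtype.ext (e.injective (congrArg Subtype.val hab))
    simpa using hinj.trans_lt (mk_Iio_lt t (by simp))
  choose x hx using hescape
  obtain ⟨C, hC, hCcard⟩ := Order.exists_cof_eq (#X).ord.ToType
  obtain ⟨B, hB⟩ := le_mk_iff_exists_set.1 hμ.le
  have hμinf : ℵ₀ ≤ μ :=
    (Ordinal.aleph0_le_cof_iff.2 (Ordinal.one_lt_cof_iff.2 (isSuccLimit_ord hX))).trans hcf
  refine ⟨x '' C ∪ B, le_antisymm ?_ ?_, fun j hj => ?_⟩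
  · have hxC : #(x '' C) ≤ μ := mk_image_le.trans (by rwa [hCcard, Ordinal.cof_toType])
    calc #↥(x '' C ∪ B) ≤ #(x '' C) + #B := mk_union_le _ _
      _ ≤ μ + μ := add_le_add hxC hB.le
      _ = μ := add_eq_self hμinf
  · exact hB ▸ mk_le_mk_of_subset Set.subset_union_right
  · have := noMaxOrder hX
    obtain ⟨a, ha⟩ := exists_gt (e j)
    obtain ⟨t, htC, hat⟩ := hC a
    exact hx t (Set.mem_iUnion.2 ⟨⟨j, ha.trans_le hat⟩, hj (Or.inl ⟨t, htC, rfl⟩)⟩)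

theorem mk_sigma_arrow_le_two_power {ι Θ : Type u} {V : ι → Type u} (hΘ : ℵ₀ ≤ #Θ)
    (hι : #ι ≤ 2 ^ #Θ) (hV : ∀ i, #(V i) ≤ 2 ^ #Θ) : #(Σ i, Θ → V i) ≤ 2 ^ #Θ := by
  have h2 : ℵ₀ ≤ (2 : Cardinal) ^ #Θ := hΘ.trans (cantor _).le
  have harrow (i : ι) : #(Θ → V i) ≤ 2 ^ #Θ :=
    calc #(Θ → V i) = #(V i) ^ #Θ := (power_def _ _).symm
      _ ≤ (2 ^ #Θ) ^ #Θ := power_le_power_right (hV i)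
      _ = 2 ^ #Θ := by rw [← power_mul, mul_eq_self hΘ]
  calc #(Σ i, Θ → V i) = sum fun i => #(Θ → V i) := mk_sigma _
    _ ≤ sum fun _ : ι => (2 : Cardinal) ^ #Θ := sum_le_sum _ _ harrow
    _ = #ι * 2 ^ #Θ := sum_const' _ _
    _ ≤ 2 ^ #Θ * 2 ^ #Θ := mul_le_mul_left hι _
    _ = 2 ^ #Θ := mul_eq_self h2

end Cardinal

namespace SimpleGraph

variable {V Θ : Type u}

def traceFamily (G : SimpleGraph V) (g : Θ → V) : Set (Set Θ) :=
  Set.range fun v => {z | G.Adj (g z) v}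

theorem mk_traceFamily_le (G : SimpleGraph V) (g : Θ → V) : #(G.traceFamily g) ≤ #V :=
  mk_range_le

theorem Embedding.subset_traceFamily {G : SimpleGraph V} {A : Set (Set Θ)}
    (f : incidenceGraph Θ A ↪g G) : A ⊆ G.traceFamily fun z => f (Sum.inl z) := by
  intro x hx
  refine ⟨f (Sum.inr ⟨x, hx⟩), Set.ext fun z => ?_⟩
  rw [Set.mem_ofPred_eq, f.map_adj_iff]
  simp [incidenceGraph]

end SimpleGraph

/-- If `θ` is infinite and `cf(2^θ) ≤ λ < 2^θ`, then there is no family of at most `2^θ`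
graphs, each of cardinality `λ`, such that every incidence graph `Γ_A` with `|A| = λ`
embeds as an induced subgraph into some member of the family. -/
theorem stmt4 (θ lam : Cardinal.{u}) (hθ : ℵ₀ ≤ θ)
    (hcf : ((2 : Cardinal.{u}) ^ θ).ord.cof ≤ lam) (hlt : lam < 2 ^ θ) :
    ¬ ∃ (ι : Type u) (V : ι → Type u) (G : ∀ i, SimpleGraph (V i)),
        #ι ≤ 2 ^ θ ∧ (∀ i, #(V i) = lam) ∧
        ∀ A : Set (Set θ.out), #A = lam →
          ∃ i, Nonempty (incidenceGraph θ.out A ↪g G i) := by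
  rintro ⟨ι, V, G, hι, hV, hcover⟩
  have hΘ : #θ.out = θ := mk_out θ
  have hX : #(Set θ.out) = 2 ^ θ := by rw [mk_set, hΘ]
  have hJ : #(Σ i, θ.out → V i) ≤ 2 ^ θ :=
    (mk_sigma_arrow_le_two_power (by rwa [hΘ]) (by rwa [hΘ])
      fun i => by rw [hΘ, hV i]; exact hlt.le).trans_eq (by rw [hΘ])
  obtain ⟨A, hA, hAS⟩ := exists_mk_eq_forall_not_subset_of_cof_le
    (fun j : Σ i, θ.out → V i => (G j.1).traceFamily j.2)
    (hX ▸ hθ.trans (cantor θ).le) (hX ▸ hJ)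
    (fun j => ((G j.1).mk_traceFamily_le j.2).trans_eq (hV j.1)) (hX ▸ hlt) (hX ▸ hcf)
  obtain ⟨i, ⟨f⟩⟩ := hcover A hA
  exact hAS ⟨i, _⟩ f.subset_traceFamily
end

section
/- Let θ be an infinite cardinal and let λ be a cardinal with cf(2^θ) ≤ λ < 2^θ. Then there is no universal graph of cardinality λ; that is, there is no graph G of cardinality λ such that every graph of cardinality λ embeds as an induced subgraph into G. -/
universe u

open Cardinal

/-! Write `μ = 2^θ`. Since `μ^θ = μ`, König's theorem gives `θ < cf μ ≤ λ`. Fix a set `T` of size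
`θ`. A graph `G` on `λ` vertices, together with a map `g : T → V`, realizes at most `λ` traces
`{a | G.Adj (g a) v} ⊆ T`, and there are only `λ^θ ≤ μ` maps `g`. Because `cf μ ≤ λ`, a
diagonalization along a cofinal sequence in `μ` yields `λ` subsets of `T` that are not all realized
by any single `g`; the bipartite incidence graph between `T` and these subsets has `λ` vertices and
does not eed into `G`. -/

namespace Cardinal

/-- Enumerate the family along the initial ordinal of `#X`: each initial segment of it covers fewer
than `#X` points, so picking an uncovered point above each element of a cofinal set of size `cf #X`
defeats every meer. -/
theorem exists_not_subset_of_cof_le {X ι : Type u} {κ : Cardinal.{u}} (hX : ℵ₀ ≤ #X)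
    (hcf : (#X).ord.cof ≤ κ) (hκ : κ < #X) (hι : #ι ≤ #X) (A : ι → Set X)
    (hA : ∀ i, #(A i) ≤ κ) : ∃ F : Set X, #F ≤ κ ∧ ∀ i, ¬ F ⊆ A i := by
  set O := (#X).ord.ToType
  have hO : #O = #X := mk_ord_toType _
  obtain ⟨e⟩ : Nonempty (ι ↪ O) := by rwa [← le_def, hO]
  have huncovered : ∀ o : O, ∃ x, ∀ i, e i ≤ o → x ∉ A i := by
    intro o
    have hsmall : #(⋃ i ∈ e ⁻¹' Set.Iic o, A i) < #X := calc
      _ ≤ #(e ⁻¹' Set.Iic o) * ⨆ i : e ⁻¹' Set.Iic o, #(A i) := mk_biUnion_le _ _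
      _ ≤ #(Set.Iic o) * κ :=
        mul_le_mul' (mk_preimage_of_injective _ _ e.injective) (ciSup_le' fun i => hA i)
      _ < #X := by
        refine mul_lt_of_lt hX ((mk_Iic_lt o ?_ (hO ▸ hX)).trans_eq hO) hκ
        rw [hO, Ordinal.type_toType]
    obtain ⟨x, hx⟩ := compl_nonempty_of_mk_lt_mk hsmall
    exact ⟨x, fun i hi hxi => hx (Set.mem_biUnion hi hxi)⟩
  choose x hx using huncovered
  obtain ⟨S, hS, hScard⟩ := Order.exists_cof_eq O
  refine ⟨x '' S, mk_image_le.trans ?_, fun i hsub => ?_⟩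
  · rwa [hScard, ← Ordinal.cof_type, Ordinal.type_toType]
  · obtain ⟨o, hoS, hio⟩ := hS (e i)
    exact hx o i hio (hsub ⟨o, hoS, rfl⟩)

end Cardinal

namespace SimpleGraph

def traces {V T : Type*} (G : SimpleGraph V) (g : T → V) : Set (Set T) :=
  Set.range fun v => {a | G.Adj (g a) v}

theorem mk_traces_le {V T : Type u} (G : SimpleGraph V) (g : T → V) : #(G.traces g) ≤ #V :=
  mk_range_le

section Incidence

variable {T K : Type*}

def IncidenceRel (c : K → Set T) : T ⊕ K → T ⊕ K → Prop
  | .inl a, .inr k => a ∈ c k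
  | _, _ => False

def incidenceGraph (c : K → Set T) : SimpleGraph (T ⊕ K) :=
  fromRel (IncidenceRel c)

@[simp]
theorem incidenceGraph_adj_inl_inr (c : K → Set T) (a : T) (k : K) :
    (incidenceGraph c).Adj (.inl a) (.inr k) ↔ a ∈ c k := by
  simp [incidenceGraph, IncidenceRel]

theorem range_subset_traces_of_embedding {V : Type*} {G : SimpleGraph V} {c : K → Set T}
    (f : incidenceGraph c ↪g G) : Set.range c ⊆ G.traces (f ∘ .inl) := by
  rintro _ ⟨k, rfl⟩
  refine ⟨f (.inr k), ?_⟩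
  ext a
  simp [f.map_adj_iff]

end Incidence

theorem nonempty_embedding_of_mk_le {V W : Type u} {G : SimpleGraph V} {κ : Cardinal.{u}}
    (hκ : ℵ₀ ≤ κ) (huniv : ∀ (W : Type u) (H : SimpleGraph W), #W = κ → Nonempty (H ↪g G))
    (H : SimpleGraph W) (hW : #W ≤ κ) : Nonempty (H ↪g G) := by
  obtain ⟨f⟩ := huniv _ (H ⊕g (⊥ : SimpleGraph κ.out)) <| by
    rw [mk_sum, lift_id, lift_id, mk_out, add_eq_right hκ hW]
  exact ⟨f.comp Embedding.sumInl⟩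

end SimpleGraph

open SimpleGraph in
/-- If `θ` is infinite and `cf(2^θ) ≤ λ < 2^θ`, then there is no universal graph of
cardinality `λ`: no graph `G` with `|G| = λ` embeds (as an induced subgraph) every
graph of cardinality `λ`. -/
theorem stmt5 (θ lam : Cardinal.{u}) (hθ : ℵ₀ ≤ θ)
    (hcf : ((2 : Cardinal.{u}) ^ θ).ord.cof ≤ lam) (hlt : lam < 2 ^ θ) :
    ¬ ∃ (V : Type u) (G : SimpleGraph V), #V = lam ∧
        ∀ (W : Type u) (H : SimpleGraph W), #W = lam → Nonempty (H ↪g G) := by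
  rintro ⟨V, G, rfl, huniv⟩
  have hθcf : θ < ((2 : Cardinal) ^ θ).ord.cof := lt_cof_ord_power hθ one_lt_two
  have hVinf : ℵ₀ ≤ #V := (hθ.trans hθcf.le).trans hcf
  have hSet : #(Set θ.out) = 2 ^ θ := by rw [mk_set, mk_out]
  have hmaps : #(θ.out → V) ≤ #(Set θ.out) := by
    rw [hSet, ← power_def, mk_out]
    calc #V ^ θ ≤ (2 ^ θ) ^ θ := power_le_power_right hlt.le
      _ = 2 ^ θ := by rw [← power_mul, mul_eq_self hθ]
  obtain ⟨F, hFcard, hF⟩ := exists_not_subset_of_cof_le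
    ((hθ.trans (cantor θ).le).trans_eq hSet.symm) (hSet ▸ hcf) (hSet ▸ hlt) hmaps G.traces
    G.mk_traces_le
  obtain ⟨f⟩ := nonempty_embedding_of_mk_le hVinf huniv (incidenceGraph ((↑) : F → Set θ.out)) <| by
    rw [mk_sum, lift_id, lift_id, mk_out]
    exact add_le_of_le hVinf (hθcf.le.trans hcf) hFcard
  exact hF _ (by simpa using range_subset_traces_of_embedding f)
end

section
/- Let θ < λ be infinite cardinals, and let 𝒜 be a set of subsets of θ with |𝒜| = 2^θ. Suppose there exists a family F of at most 2^θ graphs, each of cardinality λ, such that for every A ⊆ 𝒜 with |A| = λ, the incidence graph Γ_A embeds as an induced subgraph into some member of F. Then there exists a family D of at most 2^θ subsets of 𝒜, each of cardinality λ, such that every X ⊆ 𝒜 with |X| = λ is contained in some member of D (that is, cf⟨[𝒜]^λ, ⊆⟩ ≤ 2^θ). -/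
universe u

open Cardinal

/-- Let `θ < λ` be infinite cardinals and `𝒜 ⊆ 𝒫(θ)` with `|𝒜| = 2^θ`.  If there is a
family of at most `2^θ` graphs, each of cardinality `λ`, such that `Γ_A` embeds as an
induced subgraph into one of them for every `A ⊆ 𝒜` with `|A| = λ`, then
`cf⟨[𝒜]^λ, ⊆⟩ ≤ 2^θ`. -/
theorem stmt11 (θ lam : Cardinal.{u}) (hθ : ℵ₀ ≤ θ) (hθlam : θ < lam) (hlam : ℵ₀ ≤ lam)
    (𝒜 : Set (Set θ.out)) (h𝒜 : #𝒜 = 2 ^ θ)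
    (ι : Type u) (V : ι → Type u) (G : ∀ i, SimpleGraph (V i))
    (hι : #ι ≤ 2 ^ θ) (hV : ∀ i, #(V i) = lam)
    (hemb : ∀ A : Set (Set θ.out), A ⊆ 𝒜 → #A = lam →
      ∃ i, Nonempty (incidenceGraph θ.out A ↪g G i)) :
    ∃ D : Set (Set (Set θ.out)), #D ≤ 2 ^ θ ∧ (∀ Y ∈ D, Y ⊆ 𝒜 ∧ #Y = lam) ∧
      ∀ X : Set (Set θ.out), X ⊆ 𝒜 → #X = lam → ∃ Y ∈ D, X ⊆ Y := by

  by_cases hcase : lam ≤ 2 ^ θ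
  · -- main case
    set Y : ∀ i : ι, (θ.out → V i) → Set (Set θ.out) := fun i g =>
      {x | x ∈ 𝒜 ∧ ∃ v : V i, ∀ z : θ.out, z ∈ x ↔ (G i).Adj (g z) v} with hYdef
    refine ⟨{Y' | (∃ i g, Y' = Y i g) ∧ #Y' = lam}, ?_, ?_, ?_⟩
    · -- cardinality bound
      have hsub : {Y' | (∃ i g, Y' = Y i g) ∧ #Y' = lam} ⊆
          Set.range (fun p : Σ i : ι, (θ.out → V i) => Y p.1 p.2) := by
        rintro Y' ⟨⟨i, g, rfl⟩, -⟩
        exact ⟨⟨i, g⟩, rfl⟩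
      calc #{Y' | (∃ i g, Y' = Y i g) ∧ #Y' = lam}
          ≤ #(Set.range (fun p : Σ i : ι, (θ.out → V i) => Y p.1 p.2)) :=
            Cardinal.mk_le_mk_of_subset hsub
        _ ≤ #(Σ i : ι, (θ.out → V i)) := Cardinal.mk_range_le
        _ = Cardinal.sum (fun i => #(θ.out → V i)) := Cardinal.mk_sigma _
        _ ≤ Cardinal.sum (fun _ : ι => 2 ^ θ) := by
            apply Cardinal.sum_le_sum
            intro i
            have : #(θ.out → V i) = lam ^ θ := by
              rw [Cardinal.mk_arrow, hV i, Cardinal.mk_out, Cardinal.lift_id,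
                Cardinal.lift_id]
            rw [this]
            calc lam ^ θ ≤ (2 ^ θ) ^ θ := Cardinal.power_le_power_right hcase
              _ = 2 ^ (θ * θ) := by rw [← Cardinal.power_mul]
              _ = 2 ^ θ := by rw [Cardinal.mul_eq_self hθ]
        _ = #ι * 2 ^ θ := by rw [Cardinal.sum_const']
        _ ≤ 2 ^ θ * 2 ^ θ := mul_le_mul_left hι _
        _ = 2 ^ (θ + θ) := by rw [← Cardinal.power_add]
        _ = 2 ^ θ := by rw [Cardinal.add_eq_self hθ]
    · rintro Y' ⟨⟨i, g, rfl⟩, hcard⟩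
      exact ⟨fun x hx => hx.1, hcard⟩
    · intro X hX𝒜 hXcard
      obtain ⟨i, ⟨f⟩⟩ := hemb X hX𝒜 hXcard
      set g : θ.out → V i := fun z => f (Sum.inl z) with hg
      have hXY : X ⊆ Y i g := by
        intro x hx
        refine ⟨hX𝒜 hx, f (Sum.inr ⟨x, hx⟩), fun z => ?_⟩
        rw [show (G i).Adj (g z) (f (Sum.inr ⟨x, hx⟩)) ↔
            (incidenceGraph θ.out X).Adj (Sum.inl z) (Sum.inr ⟨x, hx⟩) from
          f.map_rel_iff]
        simp [incidenceGraph, SimpleGraph.fromRel_adj]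
      refine ⟨Y i g, ⟨⟨i, g, rfl⟩, ?_⟩, hXY⟩
      -- #(Y i g) = lam
      apply le_antisymm
      · -- injection into V i
        have : #(Y i g) ≤ #(V i) := by
          refine ⟨⟨fun x => x.2.2.choose, ?_⟩⟩
          intro x₁ x₂ hvv
          have h₁ := x₁.2.2.choose_spec
          have h₂ := x₂.2.2.choose_spec
          apply Subtype.ext
          ext z
          have hvv' : x₁.2.2.choose = x₂.2.2.choose := hvv
          rw [h₁ z, hvv', ← h₂ z]
        rwa [hV i] at this
      · rw [← hXcard]
        exact Cardinal.mk_le_mk_of_subset hXY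
  · -- trivial case: no X of size lam exists
    push_neg at hcase
    refine ⟨∅, by simp, by simp, ?_⟩
    intro X hX hXcard
    exfalso
    have : #X ≤ 2 ^ θ := h𝒜 ▸ Cardinal.mk_le_mk_of_subset hX
    rw [hXcard] at this
    exact absurd this (not_le.mpr hcase)
end
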